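/- arXiv:2601.12843 — 3 statements merged into one kernel-verified Lean document; each statement's English description precedes it below -/
import Mathlib

section
/- Kummer's transformation: for complex a, b, z with b not a nonpositive integer, M(a, b, z) = e^z M(b - a, b, -z). -/
/-!
Multiply the two everywhere convergent series by the Cauchy product. After clearing `(b)ₙ n!`,
the coefficient of `zⁿ` becomes `∑ C(n,j) (-1)ʲ (c)ⱼ (b+j)ₙ₋ⱼ = (b-c)ₙ` with `c = b - a`: this is
the Chu–Vandermonde convolution of falling factorials at `-c` and `b + n - 1`, since
`(-1)ʲ (c)ⱼ` and `(b+j)ₙ₋ⱼ` are the falling factorials of length `j` and `n - j` there.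
-/

open Finset Polynomial Filter Topology
open scoped Nat

/-- Kummer's confluent hypergeometric function `M(a,b,z) = ₁F₁(a;b;z)` (complex version). -/
noncomputable def kummerM (a b z : ℂ) : ℂ :=
  ∑' k : ℕ, (ascPochhammer ℂ k).eval a / ((ascPochhammer ℂ k).eval b * (Nat.factorial k)) * z ^ k

section Pochhammer

variable {R : Type*} [CommRing R]

theorem descPochhammer_eval_eq_smeval (r : R) (n : ℕ) :
    (descPochhammer R n).eval r = (descPochhammer ℤ n).smeval r := by
  rw [← descPochhammer_map (Int.castRingHom R), ← aeval_eq_smeval, aeval_def, eval_map]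
  rfl

theorem descPochhammer_eval_add (r s : R) (n : ℕ) :
    (descPochhammer R n).eval (r + s) = ∑ ij ∈ antidiagonal n,
      n.choose ij.1 * ((descPochhammer R ij.1).eval r * (descPochhammer R ij.2).eval s) := by
  simp only [descPochhammer_eval_eq_smeval]
  exact Ring.descPochhammer_smeval_add n (Commute.all r s)

theorem descPochhammer_eval_neg (r : R) (n : ℕ) :
    (descPochhammer R n).eval (-r) = (-1) ^ n * (ascPochhammer R n).eval r := by
  rw [← neg_neg r, ascPochhammer_eval_neg_eq_descPochhammer, neg_neg, ← mul_assoc, ← mul_pow]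
  simp

theorem ascPochhammer_eval_add (r : R) (m n : ℕ) :
    (ascPochhammer R (m + n)).eval r
      = (ascPochhammer R m).eval r * (ascPochhammer R n).eval (r + m) := by
  rw [← ascPochhammer_mul, eval_mul, eval_comp]
  simp

theorem ascPochhammer_eval_sub_eq_sum (b c : R) (n : ℕ) :
    (ascPochhammer R n).eval (b - c) = ∑ ij ∈ antidiagonal n,
      n.choose ij.1 * (ascPochhammer R ij.1).eval (b + ij.2) *
        ((-1) ^ ij.2 * (ascPochhammer R ij.2).eval c) := by
  have h := descPochhammer_eval_add (b + (n - 1)) (-c) n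
  rw [descPochhammer_eval_eq_ascPochhammer] at h
  convert h using 1
  · ring_nf
  · refine sum_congr rfl fun ⟨i, j⟩ hij => ?_
    rw [HasAntidiagonal.mem_antidiagonal] at hij
    have hshift : b + ((n : R) - 1) - i + 1 = b + j := by
      rw [← hij]; push_cast; ring
    rw [descPochhammer_eval_neg, descPochhammer_eval_eq_ascPochhammer, hshift, mul_assoc]

end Pochhammer

noncomputable def kummerCoeff (a b : ℂ) (k : ℕ) : ℂ :=
  (ascPochhammer ℂ k).eval a / ((ascPochhammer ℂ k).eval b * k !)

theorem kummerM_eq_tsum (a b z : ℂ) : kummerM a b z = ∑' k, kummerCoeff a b k * z ^ k := rfl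

theorem kummerCoeff_succ (a b : ℂ) (k : ℕ) :
    kummerCoeff a b (k + 1) = kummerCoeff a b k * ((a + k) / ((b + k) * (k + 1))) := by
  simp only [kummerCoeff, ascPochhammer_succ_eval, Nat.factorial_succ, div_mul_div_comm]
  push_cast
  ring

theorem tendsto_kummerCoeff_ratio (a b : ℂ) :
    Tendsto (fun k : ℕ => (a + k) / ((b + k) * (k + 1))) atTop (𝓝 0) := by
  let f : ℂ → ℂ := fun u => (a * u + 1) * u / ((b * u + 1) * (1 + u))
  have hf : Tendsto f (𝓝 0) (𝓝 0) := by
    have hcont : ContinuousAt f 0 :=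
      (by fun_prop : Continuous fun u : ℂ => (a * u + 1) * u).continuousAt.div
        (by fun_prop) (by norm_num)
    simpa [f] using hcont.tendsto
  refine (hf.comp tendsto_inv_atTop_nhds_zero_nat).congr' ?_
  filter_upwards [eventually_ne_atTop 0] with k hk
  have hk : (k : ℂ) ≠ 0 := Nat.cast_ne_zero.mpr hk
  simp only [f, Function.comp_apply]
  rw [← mul_div_mul_right _ _ (pow_ne_zero 2 hk)]
  field_simp

-- This form of the ratio test tolerates vanishing terms (`a` a nonpositive integer, or `z = 0`).
theorem summable_norm_kummerCoeff_mul_pow (a b z : ℂ) :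
    Summable fun k => ‖kummerCoeff a b k * z ^ k‖ := by
  refine summable_of_ratio_norm_eventually_le (r := 1 / 2) (by norm_num) ?_
  have hratio := ((tendsto_kummerCoeff_ratio a b).mul_const z).norm
  rw [zero_mul, norm_zero] at hratio
  filter_upwards [hratio.eventually (ge_mem_nhds (by norm_num : (0 : ℝ) < 1 / 2))] with k hk
  calc ‖‖kummerCoeff a b (k + 1) * z ^ (k + 1)‖‖
      = ‖(a + k) / ((b + k) * (k + 1)) * z‖ * ‖kummerCoeff a b k * z ^ k‖ := by
        rw [norm_norm, kummerCoeff_succ, pow_succ, ← norm_mul]; ring_nf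
    _ ≤ 1 / 2 * ‖‖kummerCoeff a b k * z ^ k‖‖ := by
        rw [norm_norm]; exact mul_le_mul_of_nonneg_right hk (norm_nonneg _)

theorem ascPochhammer_eval_ne_zero {b : ℂ} (hb : ∀ n : ℕ, b ≠ -(n : ℂ)) (n : ℕ) :
    (ascPochhammer ℂ n).eval b ≠ 0 := by
  rw [Ne, ascPochhammer_eval_eq_zero_iff]
  rintro ⟨k, -, hk⟩
  exact hb k (by rw [hk, neg_neg])

theorem sum_antidiagonal_kummerCoeff {b : ℂ} (hb : ∀ n : ℕ, b ≠ -(n : ℂ)) (c : ℂ) (n : ℕ) :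
    ∑ ij ∈ antidiagonal n, (-1) ^ ij.2 * kummerCoeff c b ij.2 / ij.1 !
      = kummerCoeff (b - c) b n := by
  rw [kummerCoeff, ascPochhammer_eval_sub_eq_sum, sum_div]
  refine sum_congr rfl fun ⟨i, j⟩ hij => ?_
  rw [HasAntidiagonal.mem_antidiagonal] at hij
  subst hij
  have hb_j := ascPochhammer_eval_ne_zero hb j
  have hbj_i : (ascPochhammer ℂ i).eval (b + j) ≠ 0 := by
    have := ascPochhammer_eval_ne_zero hb (j + i)
    rw [ascPochhammer_eval_add] at this
    exact right_ne_zero_of_mul this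
  have hchoose : ((i + j).choose i : ℂ) ≠ 0 := by
    exact_mod_cast (Nat.choose_pos (Nat.le_add_right i j)).ne'
  have hfact : ((i + j).choose i * i ! * j ! : ℂ) = (i + j)! := by
    rw [Nat.choose_symm_add]
    exact_mod_cast Nat.add_choose_mul_factorial_mul_factorial i j
  rw [add_comm i j, ascPochhammer_eval_add, add_comm j i, ← hfact, kummerCoeff]
  field_simp

/-- Kummer's transformation `M(a,b,z) = e^z M(b-a,b,-z)`. -/
theorem kummer_transformation (a b z : ℂ) (hb : ∀ n : ℕ, b ≠ -(n : ℂ)) :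
    kummerM a b z = Complex.exp z * kummerM (b - a) b (-z) := by
  rw [Complex.exp_eq_exp_ℂ, NormedSpace.exp_eq_tsum_div, kummerM_eq_tsum, kummerM_eq_tsum,
    tsum_mul_tsum_eq_tsum_sum_antidiagonal_of_summable_norm
      (NormedSpace.norm_expSeries_div_summable z) (summable_norm_kummerCoeff_mul_pow _ _ _)]
  refine tsum_congr fun n => ?_
  rw [← sub_sub_cancel b a, ← sum_antidiagonal_kummerCoeff hb, sum_mul]
  refine sum_congr rfl fun ⟨i, j⟩ hij => ?_
  rw [HasAntidiagonal.mem_antidiagonal] at hij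
  subst hij
  rw [sub_sub_cancel, neg_pow, pow_add]
  ring
end

section
/- First Barnes lemma: for complex a, b, c, d such that a+c, a+d, b+c, b+d are not nonpositive integers and Re(a+b+c+d) < 1, one has (1/2πi) ∫_{-i∞}^{+i∞} Γ(a+s)Γ(b+s)Γ(c-s)Γ(d-s) ds = Γ(a+c)Γ(a+d)Γ(b+c)Γ(b+d)/Γ(a+b+c+d), where the contour separates the poles of Γ(a+s)Γ(b+s) from those of Γ(c-s)Γ(d-s). -/
/-!
With `σ` the sigmoid, the kernel `K p q u = σ(u)^p σ(-u)^q = e^{pu} / (1 + e^u)^{p+q}`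
(`logisticBeta`) has total mass `B(p, q) = Γ(p)Γ(q)/Γ(p+q)` by the substitution `x = σ(u)`, and
multiplying it by `e^{iut}` shifts `(p, q)` to `(p + it, q - it)`. Hence `Γ(a + it)Γ(c - it)` is
`Γ(a + c)` times the Fourier transform of `K c a` at `t / 2π`, and the Barnes integral becomes
`∫ 𝓕(K c a) 𝓕(K d b)`. By self-adjointness of `𝓕` and Fourier inversion this equals
`∫ K c a (x) K d b (-x) dx`, the mass of `K (b + c) (a + d)`, i.e. `B(b + c, a + d)`. Inversion
needs `𝓕 (K d b)` to be integrable, which follows from the integrability of the first two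
derivatives of `K d b`.
-/

open Complex MeasureTheory
open Real (sigmoid)
open Set FourierTransform
open scoped Real

lemma sigmoid_le_exp (u : ℝ) : sigmoid u ≤ Real.exp u := by
  rw [Real.sigmoid_def, ← inv_inv (Real.exp u), ← Real.exp_neg]
  exact inv_anti₀ (Real.exp_pos _) (le_add_of_nonneg_left zero_le_one)

lemma ofReal_sigmoid_ne_zero (u : ℝ) : (sigmoid u : ℂ) ≠ 0 :=
  ofReal_ne_zero.2 (Real.sigmoid_pos u).ne'

lemma sigmoid_cpow_div_sigmoid_neg_cpow (z : ℂ) (u : ℝ) :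
    (sigmoid u : ℂ) ^ z / (sigmoid (-u) : ℂ) ^ z = cexp (z * u) := by
  have hlog : Real.log (sigmoid u) - Real.log (sigmoid (-u)) = u := by
    rw [← Real.sigmoid_mul_rexp_neg, Real.log_mul (Real.sigmoid_pos u).ne' (Real.exp_pos _).ne',
      Real.log_exp]
    ring
  rw [cpow_def_of_ne_zero (ofReal_sigmoid_ne_zero u),
    cpow_def_of_ne_zero (ofReal_sigmoid_ne_zero _), ← exp_sub, ← sub_mul,
    ← ofReal_log (Real.sigmoid_pos _).le, ← ofReal_log (Real.sigmoid_pos _).le, ← ofReal_sub,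
    hlog, mul_comm]

lemma hasDerivAt_sigmoid_cpow (p : ℂ) (u : ℝ) :
    HasDerivAt (fun u => (sigmoid u : ℂ) ^ p) (p * (sigmoid u : ℂ) ^ p * sigmoid (-u)) u := by
  refine (hasStrictDerivAt_cpow_const (c := p) (ofReal_mem_slitPlane.2 (Real.sigmoid_pos u))
    |>.hasDerivAt.comp u (Real.hasDerivAt_sigmoid u).ofReal_comp).congr_deriv ?_
  have := ofReal_sigmoid_ne_zero u
  rw [Real.sigmoid_neg, cpow_sub _ _ this, cpow_one]
  push_cast
  field_simp

noncomputable def logisticBeta (p q : ℂ) (u : ℝ) : ℂ :=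
  (sigmoid u : ℂ) ^ p * (sigmoid (-u) : ℂ) ^ q

lemma logisticBeta_neg (p q : ℂ) (u : ℝ) : logisticBeta p q (-u) = logisticBeta q p u := by
  rw [logisticBeta, logisticBeta, neg_neg, mul_comm]

lemma logisticBeta_mul (p q p' q' : ℂ) (u : ℝ) :
    logisticBeta p q u * logisticBeta p' q' u = logisticBeta (p + p') (q + q') u := by
  rw [logisticBeta, logisticBeta, logisticBeta, cpow_add _ _ (ofReal_sigmoid_ne_zero u),
    cpow_add _ _ (ofReal_sigmoid_ne_zero _)]
  ring

lemma logisticBeta_add_sub (p q z : ℂ) (u : ℝ) :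
    logisticBeta (p + z) (q - z) u = cexp (z * u) * logisticBeta p q u := by
  have hσ := ofReal_sigmoid_ne_zero (-u)
  have hσz : (sigmoid (-u) : ℂ) ^ z ≠ 0 := by simp [hσ]
  rw [logisticBeta, logisticBeta, cpow_add _ _ (ofReal_sigmoid_ne_zero u), cpow_sub _ _ hσ,
    ← sigmoid_cpow_div_sigmoid_neg_cpow z u]
  field_simp

lemma norm_logisticBeta (p q : ℂ) (u : ℝ) :
    ‖logisticBeta p q u‖ = sigmoid u ^ p.re * sigmoid (-u) ^ q.re := by
  rw [logisticBeta, norm_mul, norm_cpow_eq_rpow_re_of_pos (Real.sigmoid_pos _),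
    norm_cpow_eq_rpow_re_of_pos (Real.sigmoid_pos _)]

lemma norm_logisticBeta_le {p q : ℂ} (hp : 0 ≤ p.re) (hq : 0 ≤ q.re) (u : ℝ) :
    ‖logisticBeta p q u‖ ≤ Real.exp (p.re * u) := by
  rw [norm_logisticBeta, mul_comm p.re, Real.exp_mul]
  calc sigmoid u ^ p.re * sigmoid (-u) ^ q.re ≤ sigmoid u ^ p.re :=
        mul_le_of_le_one_right (Real.rpow_nonneg (Real.sigmoid_nonneg _) _)
          (Real.rpow_le_one (Real.sigmoid_nonneg _) (Real.sigmoid_le_one _) hq)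
    _ ≤ Real.exp u ^ p.re := Real.rpow_le_rpow (Real.sigmoid_nonneg _) (sigmoid_le_exp u) hp

lemma continuous_logisticBeta (p q : ℂ) : Continuous (logisticBeta p q) := by
  have hpow (r : ℂ) {f : ℝ → ℝ} (hf : Continuous f) (hpos : ∀ u, 0 < f u) :
      Continuous fun u => (f u : ℂ) ^ r :=
    continuous_iff_continuousAt.2 fun u =>
      (continuousAt_ofReal_cpow_const _ r (Or.inr (hpos u).ne')).comp hf.continuousAt
  exact (hpow p continuous_sigmoid Real.sigmoid_pos).mul
    (hpow q (continuous_sigmoid.comp continuous_neg) fun u => Real.sigmoid_pos _)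

lemma integrable_logisticBeta {p q : ℂ} (hp : 0 < p.re) (hq : 0 < q.re) :
    Integrable (logisticBeta p q) := by
  have hmeas := (continuous_logisticBeta p q).aestronglyMeasurable (μ := volume)
  have hIic : IntegrableOn (logisticBeta p q) (Iic 0) :=
    (integrableOn_exp_mul_Iic hp 0).mono' hmeas.restrict
      (ae_of_all _ (norm_logisticBeta_le hp.le hq.le))
  have hIoi : IntegrableOn (logisticBeta p q) (Ioi 0) := by
    refine (integrableOn_exp_mul_Ioi (neg_lt_zero.2 hq) 0).mono' hmeas.restrict
      (ae_of_all _ fun u => ?_)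
    rw [← neg_neg u, logisticBeta_neg, neg_mul_neg]
    exact norm_logisticBeta_le hq.le hp.le _
  rw [← integrableOn_univ, ← Iic_union_Ioi (a := (0 : ℝ))]
  exact hIic.union hIoi

lemma hasDerivAt_logisticBeta (p q : ℂ) (u : ℝ) :
    HasDerivAt (logisticBeta p q)
      (p * logisticBeta p (q + 1) u - q * logisticBeta (p + 1) q u) u := by
  have h := (hasDerivAt_sigmoid_cpow p u).mul
    ((hasDerivAt_sigmoid_cpow q (-u)).scomp u (hasDerivAt_neg u))
  simp only [neg_neg] at h
  refine h.congr_deriv ?_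
  simp only [logisticBeta, cpow_add _ _ (ofReal_sigmoid_ne_zero _), cpow_one, Function.comp_apply,
    neg_smul, one_smul, mul_neg]
  ring

lemma integral_logisticBeta (p q : ℂ) : ∫ u, logisticBeta p q u = betaIntegral p q := by
  have hsub : ∫ x in sigmoid '' univ, (x : ℂ) ^ (p - 1) * (1 - (x : ℂ)) ^ (q - 1) =
      ∫ u, |sigmoid u * (1 - sigmoid u)| •
        ((sigmoid u : ℂ) ^ (p - 1) * (1 - (sigmoid u : ℂ)) ^ (q - 1)) := by
    rw [integral_image_eq_integral_abs_deriv_smul MeasurableSet.univ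
      (fun u _ => (Real.hasDerivAt_sigmoid u).hasDerivWithinAt) Real.sigmoid_injective.injOn,
      setIntegral_univ]
  rw [betaIntegral, intervalIntegral.integral_of_le zero_le_one, integral_Ioc_eq_integral_Ioo,
    ← Real.range_sigmoid, ← image_univ, hsub]
  congr 1 with u
  rw [← Real.sigmoid_neg, abs_of_pos (mul_pos (Real.sigmoid_pos _) (Real.sigmoid_pos _)),
    show 1 - (sigmoid u : ℂ) = sigmoid (-u) by push_cast [Real.sigmoid_neg]; ring,
    logisticBeta, cpow_sub _ _ (ofReal_sigmoid_ne_zero u), cpow_sub _ _ (ofReal_sigmoid_ne_zero _),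
    cpow_one, cpow_one, real_smul]
  have := ofReal_sigmoid_ne_zero u
  have := ofReal_sigmoid_ne_zero (-u)
  push_cast
  field_simp

lemma integral_logisticBeta_eq_Gamma {p q : ℂ} (hp : 0 < p.re) (hq : 0 < q.re) :
    ∫ u, logisticBeta p q u = Gamma p * Gamma q / Gamma (p + q) := by
  rw [integral_logisticBeta, Gamma_mul_Gamma_eq_betaIntegral hp hq,
    mul_div_cancel_left₀ _ (Gamma_ne_zero_of_re_pos (by rw [add_re]; positivity))]

lemma fourier_logisticBeta {p q : ℂ} (hp : 0 < p.re) (hq : 0 < q.re) (w : ℝ) :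
    𝓕 (logisticBeta p q) w =
      Gamma (p - 2 * π * w * I) * Gamma (q + 2 * π * w * I) / Gamma (p + q) := by
  have hmod (u : ℝ) : cexp (↑(-2 * π * u * w) * I) • logisticBeta p q u =
      logisticBeta (p - 2 * π * w * I) (q + 2 * π * w * I) u := by
    rw [sub_eq_add_neg, ← sub_neg_eq_add q, logisticBeta_add_sub, smul_eq_mul]
    push_cast
    ring_nf
  rw [Real.fourier_real_eq_integral_exp_smul]
  simp_rw [hmod]
  rw [integral_logisticBeta_eq_Gamma (by simpa using hp) (by simpa using hq)]
  ring_nf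

lemma norm_fourier_of_hasDerivAt {E : Type*} [NormedAddCommGroup E] [NormedSpace ℂ E]
    {f f' : ℝ → E} (hf : Integrable f) (hf' : Integrable f') (hd : ∀ x, HasDerivAt f (f' x) x)
    (x : ℝ) : ‖𝓕 f' x‖ = 2 * π * |x| * ‖𝓕 f x‖ := by
  have hderiv : deriv f = f' := funext fun x => (hd x).deriv
  rw [← hderiv, Real.fourier_deriv hf (fun x => (hd x).differentiableAt) (hderiv ▸ hf'),
    norm_smul]
  simp [abs_of_pos Real.pi_pos]

lemma integrable_fourier_of_hasDerivAt {E : Type*} [NormedAddCommGroup E] [NormedSpace ℂ E]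
    {f f' f'' : ℝ → E} (hf : Integrable f) (hf' : Integrable f') (hf'' : Integrable f'')
    (hd : ∀ x, HasDerivAt f (f' x) x) (hd' : ∀ x, HasDerivAt f' (f'' x) x) :
    Integrable (𝓕 f) := by
  have hnorm (g : ℝ → E) (x : ℝ) : ‖𝓕 g x‖ ≤ ∫ x, ‖g x‖ :=
    VectorFourier.norm_fourierIntegral_le_integral_norm _ _ _ _ _
  set C := (∫ x, ‖f x‖) + ∫ x, ‖f'' x‖
  have hbound (x : ℝ) : ‖𝓕 f x‖ ≤ C * (1 + (2 * π * x) ^ 2)⁻¹ := by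
    rw [← div_eq_mul_inv, le_div_iff₀ (by positivity)]
    calc ‖𝓕 f x‖ * (1 + (2 * π * x) ^ 2) = ‖𝓕 f x‖ + ‖𝓕 f'' x‖ := by
          rw [norm_fourier_of_hasDerivAt hf' hf'' hd', norm_fourier_of_hasDerivAt hf hf' hd,
            ← sq_abs (2 * π * x), abs_mul, abs_of_pos Real.two_pi_pos]
          ring
      _ ≤ C := add_le_add (hnorm f x) (hnorm f'' x)
  exact ((integrable_inv_one_add_sq.const_mul C).comp_mul_left' Real.two_pi_pos.ne').mono'
    (VectorFourier.fourierIntegral_continuous Real.continuous_fourierChar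
      (innerSL ℝ).continuous₂ hf).aestronglyMeasurable (ae_of_all _ hbound)

lemma integral_fourier_mul_fourier {V : Type*} [NormedAddCommGroup V]
    [InnerProductSpace ℝ V] [FiniteDimensional ℝ V] [MeasurableSpace V] [BorelSpace V]
    {φ ψ : V → ℂ} (hφ : Integrable φ) (hψ : Integrable ψ) (hψc : Continuous ψ)
    (hFψ : Integrable (𝓕 ψ)) :
    ∫ ξ, 𝓕 φ ξ * 𝓕 ψ ξ = ∫ x, φ x * ψ (-x) := by
  have hself : ∫ ξ, 𝓕 φ ξ * 𝓕 ψ ξ = ∫ x, φ x * 𝓕 (𝓕 ψ) x := by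
    simpa using! VectorFourier.integral_fourierIntegral_smul_eq_flip (L := innerₗ V)
      Real.continuous_fourierChar continuous_inner hφ hFψ
  have hinv (x : V) : 𝓕 (𝓕 ψ) x = ψ (-x) := by
    simpa [Real.fourierInv_eq_fourier_neg] using
      congrFun (hψc.fourierInv_fourier_eq hψ hFψ) (-x)
  simp_rw [hself, hinv]

lemma integrable_fourier_logisticBeta {p q : ℂ} (hp : 0 < p.re) (hq : 0 < q.re) :
    Integrable (𝓕 (logisticBeta p q)) := by
  have hint {p' q' : ℂ} (hp' : p.re ≤ p'.re) (hq' : q.re ≤ q'.re) :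
      Integrable (logisticBeta p' q') :=
    integrable_logisticBeta (hp.trans_le hp') (hq.trans_le hq')
  have hint_deriv {p' q' : ℂ} (hp' : p.re ≤ p'.re) (hq' : q.re ≤ q'.re) :
      Integrable fun u => p' * logisticBeta p' (q' + 1) u - q' * logisticBeta (p' + 1) q' u :=
    ((hint hp' (by simp; linarith)).const_mul p').sub
      ((hint (by simp; linarith) hq').const_mul q')
  refine integrable_fourier_of_hasDerivAt (hint le_rfl le_rfl) (hint_deriv le_rfl le_rfl) ?_
    (hasDerivAt_logisticBeta p q) fun u =>
      ((hasDerivAt_logisticBeta p (q + 1) u).const_mul p).sub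
        ((hasDerivAt_logisticBeta (p + 1) q u).const_mul q)
  exact ((hint_deriv le_rfl (by simp)).const_mul p).sub
    ((hint_deriv (by simp) le_rfl).const_mul q)

lemma Gamma_mul_Gamma_eq_fourier_logisticBeta {p q : ℂ} (hp : 0 < p.re) (hq : 0 < q.re)
    (t : ℝ) :
    Gamma (p + I * t) * Gamma (q - I * t) =
      Gamma (p + q) * 𝓕 (logisticBeta q p) (t / (2 * π)) := by
  have : Gamma (p + q) ≠ 0 := Gamma_ne_zero_of_re_pos (by rw [add_re]; positivity)
  rw [fourier_logisticBeta hq hp, add_comm q p]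
  push_cast
  field_simp

/-- The contour is the imaginary axis `s = it`, so `(1/2πi)∫ ds = (1/2π)∫ dt`; the positivity
of `re a, re b, re c, re d` says that it separates the poles of `Γ(a+s)Γ(b+s)` from those of
`Γ(c-s)Γ(d-s)`. -/
theorem first_barnes_lemma_general (a b c d : ℂ)
    (ha : 0 < a.re) (hb : 0 < b.re) (hc : 0 < c.re) (hd : 0 < d.re) :
    (1 / (2 * Real.pi)) * (∫ t : ℝ,
        Complex.Gamma (a + Complex.I * t) * Complex.Gamma (b + Complex.I * t) *
        Complex.Gamma (c - Complex.I * t) * Complex.Gamma (d - Complex.I * t))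
      = Complex.Gamma (a + c) * Complex.Gamma (a + d) * Complex.Gamma (b + c) *
          Complex.Gamma (b + d) / Complex.Gamma (a + b + c + d) := by
  have hintegrand (t : ℝ) :
      Gamma (a + I * t) * Gamma (b + I * t) * Gamma (c - I * t) * Gamma (d - I * t) =
        Gamma (a + c) * Gamma (b + d) *
          (𝓕 (logisticBeta c a) (t / (2 * π)) * 𝓕 (logisticBeta d b) (t / (2 * π))) := by
    rw [← mul_mul_mul_comm, ← Gamma_mul_Gamma_eq_fourier_logisticBeta ha hc,
      ← Gamma_mul_Gamma_eq_fourier_logisticBeta hb hd]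
    ring
  have hprod (x : ℝ) :
      logisticBeta c a x * logisticBeta d b (-x) = logisticBeta (b + c) (a + d) x := by
    rw [logisticBeta_neg, logisticBeta_mul, add_comm c b]
  simp_rw [hintegrand]
  rw [integral_const_mul,
    Measure.integral_comp_div (fun ξ => 𝓕 (logisticBeta c a) ξ * 𝓕 (logisticBeta d b) ξ),
    integral_fourier_mul_fourier (integrable_logisticBeta hc ha) (integrable_logisticBeta hd hb)
      (continuous_logisticBeta d b) (integrable_fourier_logisticBeta hd hb)]
  simp_rw [hprod]
  rw [integral_logisticBeta_eq_Gamma (by rw [add_re]; positivity) (by rw [add_re]; positivity),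
    abs_of_pos Real.two_pi_pos, real_smul, show b + c + (a + d) = a + b + c + d by ring]
  push_cast
  field_simp

/-- First Barnes lemma: parametrising the contour along the imaginary
axis as `s = it`, so that `(1/2πi)∫_{-i∞}^{+i∞} ds = (1/2π)∫_ℝ dt`. The hypotheses
`0 < Re a, Re b, Re c, Re d` express that the imaginary axis separates the poles of
`Γ(a+s)Γ(b+s)` from those of `Γ(c-s)Γ(d-s)`. -/
theorem first_barnes_lemma (a b c d : ℂ)
    (hac : ∀ n : ℕ, a + c ≠ -(n : ℂ)) (had : ∀ n : ℕ, a + d ≠ -(n : ℂ))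
    (hbc : ∀ n : ℕ, b + c ≠ -(n : ℂ)) (hbd : ∀ n : ℕ, b + d ≠ -(n : ℂ))
    (hre : (a + b + c + d).re < 1)
    (ha : 0 < a.re) (hb : 0 < b.re) (hc : 0 < c.re) (hd : 0 < d.re) :
    (1 / (2 * Real.pi)) * (∫ t : ℝ,
        Complex.Gamma (a + Complex.I * t) * Complex.Gamma (b + Complex.I * t) *
        Complex.Gamma (c - Complex.I * t) * Complex.Gamma (d - Complex.I * t))
      = Complex.Gamma (a + c) * Complex.Gamma (a + d) * Complex.Gamma (b + c) *
          Complex.Gamma (b + d) / Complex.Gamma (a + b + c + d) :=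
  first_barnes_lemma_general a b c d ha hb hc hd
end

section
/- For real α with 0 < α < 2, α ≠ 1, the function x(α) = i α cot(πα/2)/(2π²) satisfies x(α) = x(−α) and x(2−α) − x(α) = D(α) D(2−α) · 2(1−α)/(α(2−α)), where D(α) = D₁(α, 1/2) is given by D₁(α, ν) = (iν)^{-1/2} Γ(ν)^{-1/ν} (1−ν)^{1/2} Γ(α/2 + 1/(2ν)) / Γ(α/2 + (1−ν)/(2ν)) evaluated at ν = 1/2. -/
/-! Put `z = α/2`. The recurrence `Γ(s+1) = sΓ(s)` and the reflection formula give
`Γ(z+1)Γ(2-z) = z(1-z)π/sin(πz)` and `Γ(z+1/2)Γ(3/2-z) = (1/2-z)π/cos(πz)`, so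
`D(α)D(2-α)` is the constant `K² = -i/π²` (from `Γ(1/2)² = π`) times `α(2-α)/(2(1-α))`
times `cot(πα/2)`. On the other side `cot(π - t) = -cot t` turns `x(2-α) - x(α)` into
`-i cot(πα/2)/π²`, and the rational factors cancel. -/

open Complex Real

/-- `x(α) = i α cot(πα/2)/(2π²)`. -/
noncomputable def xRefl (alpha : ℝ) : ℂ :=
  Complex.I * (alpha : ℂ) *
    (Complex.cos (Real.pi * alpha / 2) / Complex.sin (Real.pi * alpha / 2)) /
    (2 * (Real.pi : ℂ) ^ 2)

/-- `D₁(α, ν) = (iν)^{-1/2} Γ(ν)^{-1/ν} (1−ν)^{1/2} Γ(α/2 + 1/(2ν)) / Γ(α/2 + (1−ν)/(2ν))`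
evaluated at `ν = 1/2`. -/
noncomputable def DFF (alpha : ℝ) : ℂ :=
  (Complex.I * (1 / 2 : ℂ)) ^ (-(1 / 2 : ℂ)) * Complex.Gamma (1 / 2) ^ (-(2 : ℂ)) *
    ((1 / 2 : ℂ)) ^ ((1 / 2 : ℂ)) *
    Complex.Gamma ((alpha : ℂ) / 2 + 1) / Complex.Gamma ((alpha : ℂ) / 2 + 1 / 2)

namespace Complex

theorem Gamma_add_one_mul_Gamma_two_sub {z : ℂ} (hz : z ≠ 0) (hz1 : 1 - z ≠ 0) :
    Gamma (z + 1) * Gamma (2 - z) = z * (1 - z) * (π / sin (π * z)) := by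
  rw [Gamma_add_one z hz, show 2 - z = 1 - z + 1 by ring, Gamma_add_one _ hz1,
    ← Gamma_mul_Gamma_one_sub]
  ring

theorem Gamma_add_half_mul_Gamma_three_halves_sub {z : ℂ} (hz : 1 / 2 - z ≠ 0) :
    Gamma (z + 1 / 2) * Gamma (3 / 2 - z) = (1 / 2 - z) * (π / cos (π * z)) := by
  have reflection := Gamma_mul_Gamma_one_sub (z + 1 / 2)
  rw [show 1 - (z + 1 / 2) = 1 / 2 - z by ring, show π * (z + 1 / 2) = π * z + π / 2 by ring,
    sin_add_pi_div_two] at reflection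
  rw [show 3 / 2 - z = 1 / 2 - z + 1 by ring, Gamma_add_one _ hz, ← reflection]
  ring

theorem Gamma_one_half_sq : Gamma (1 / 2) ^ 2 = π := by
  rw [Gamma_one_half_eq, ← cpow_ofNat_mul]
  norm_num

end Complex

theorem xRefl_neg (alpha : ℝ) : xRefl (-alpha) = xRefl alpha := by
  simp only [xRefl, ofReal_neg, mul_neg, neg_div, Complex.cos_neg, Complex.sin_neg]
  ring

theorem xRefl_two_sub_sub (alpha : ℝ) :
    xRefl (2 - alpha) - xRefl alpha
      = -I * Complex.cos (π * alpha / 2) / (π ^ 2 * Complex.sin (π * alpha / 2)) := by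
  simp only [xRefl, ofReal_sub, ofReal_ofNat,
    show (π : ℂ) * (2 - alpha) / 2 = π - π * alpha / 2 by ring, Complex.cos_pi_sub,
    Complex.sin_pi_sub]
  field_simp
  ring

noncomputable def dffConst : ℂ :=
  (I * (1 / 2 : ℂ)) ^ (-(1 / 2 : ℂ)) * Complex.Gamma (1 / 2) ^ (-(2 : ℂ)) *
    (1 / 2 : ℂ) ^ (1 / 2 : ℂ)

theorem DFF_eq_dffConst_mul (alpha : ℝ) : DFF alpha =
    dffConst * (Complex.Gamma (alpha / 2 + 1) / Complex.Gamma (alpha / 2 + 1 / 2)) := by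
  rw [DFF, dffConst, mul_div_assoc]

theorem dffConst_sq : dffConst ^ 2 = -I / π ^ 2 := by
  have sq_cpow : ∀ x y : ℂ, (x ^ y) ^ 2 = x ^ (2 * y) := fun x y => (cpow_ofNat_mul x 2 y).symm
  rw [dffConst, cpow_neg (Complex.Gamma _), cpow_two, Complex.Gamma_one_half_sq, mul_pow, mul_pow,
    sq_cpow, sq_cpow, show (2 : ℂ) * -(1 / 2) = -1 by norm_num,
    show (2 : ℂ) * (1 / 2) = 1 by norm_num, cpow_neg_one, cpow_one, mul_inv, inv_I]
  ring

theorem DFF_mul_DFF_two_sub {alpha : ℝ} (h0 : alpha ≠ 0) (h1 : alpha ≠ 1) (h2 : alpha ≠ 2) :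
    DFF alpha * DFF (2 - alpha) = -I / π ^ 2 * (alpha * (2 - alpha) / (2 * (1 - alpha))) *
      (Complex.cos (π * alpha / 2) / Complex.sin (π * alpha / 2)) := by
  have hz0 : (alpha : ℂ) / 2 ≠ 0 := div_ne_zero (ofReal_ne_zero.mpr h0) two_ne_zero
  have hz1 : 1 - (alpha : ℂ) / 2 ≠ 0 := fun h =>
    h2 (by exact_mod_cast (by linear_combination -2 * h : (alpha : ℂ) = 2))
  have hz2 : 1 / 2 - (alpha : ℂ) / 2 ≠ 0 := fun h =>
    h1 (by exact_mod_cast (by linear_combination -2 * h : (alpha : ℂ) = 1))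
  have h_args : ((2 - alpha : ℝ) : ℂ) / 2 + 1 = 2 - alpha / 2 ∧
      ((2 - alpha : ℝ) : ℂ) / 2 + 1 / 2 = 3 / 2 - alpha / 2 := by
    constructor <;> push_cast <;> ring
  rw [DFF_eq_dffConst_mul, DFF_eq_dffConst_mul, h_args.1, h_args.2, mul_mul_mul_comm,
    div_mul_div_comm, ← sq, dffConst_sq, Complex.Gamma_add_one_mul_Gamma_two_sub hz0 hz1,
    Complex.Gamma_add_half_mul_Gamma_three_halves_sub hz2, mul_div_assoc (π : ℂ)]
  field_simp

/-- the free-fermion reflection equations are solved by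
`x(α) = iα cot(πα/2)/(2π²)`. -/
theorem reflection_relations_free_fermion (alpha : ℝ)
    (h0 : 0 < alpha) (h2 : alpha < 2) (h1 : alpha ≠ 1) :
    xRefl alpha = xRefl (-alpha) ∧
    xRefl (2 - alpha) - xRefl alpha
      = DFF alpha * DFF (2 - alpha) *
          (2 * (1 - (alpha : ℂ)) / ((alpha : ℂ) * (2 - (alpha : ℂ)))) := by
  refine ⟨(xRefl_neg alpha).symm, ?_⟩
  have h0' : (alpha : ℂ) ≠ 0 := by exact_mod_cast h0.ne'
  have h1' : 1 - (alpha : ℂ) ≠ 0 := sub_ne_zero.mpr (by exact_mod_cast h1.symm)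
  have h2' : 2 - (alpha : ℂ) ≠ 0 := sub_ne_zero.mpr (by exact_mod_cast h2.ne')
  rw [xRefl_two_sub_sub, DFF_mul_DFF_two_sub h0.ne' h1 h2.ne]
  field_simp
end
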